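/- Let h : ℝ^M → ℝ be differentiable, convex, and l-strongly convex with l > 0, let η > 0 and d ∈ ℝ^M, and let κ₊ be a global minimizer over ℝ^M of κ ↦ ⟨d, κ⟩ + (1/η)·V_h(κ, κₜ). Then ‖κ₊ − κₜ‖ ≤ (η/l)·‖d‖. -/

import Mathlib

open scoped RealInnerProductSpace

/-!
First-order optimality of the minimizer gives `∇h(κ₊) - ∇h(κₜ) = -η d`. Adding the strong convexity
inequality at `(κ₊, κₜ)` and at `(κₜ, κ₊)` shows that `∇h` is `l`-strongly monotone, so
`l ‖κ₊ - κₜ‖² ≤ ⟪-η d, κ₊ - κₜ⟫ ≤ η ‖d‖ ‖κ₊ - κₜ‖` by Cauchy–Schwarz.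
-/

section Bregman

variable {E : Type*} [NormedAddCommGroup E] [InnerProductSpace ℝ E]

def bregmanDiv (h : E → ℝ) (h' : E → E) (x y : E) : ℝ :=
  h x - h y - ⟪h' y, x - y⟫

theorem bregmanDiv_add_bregmanDiv_swap (h : E → ℝ) (h' : E → E) (x y : E) :
    bregmanDiv h h' x y + bregmanDiv h h' y x = ⟪h' x - h' y, x - y⟫ := by
  have hyx : y - x = -(x - y) := (neg_sub x y).symm
  simp only [bregmanDiv, hyx, inner_neg_right, inner_sub_left]
  ring

theorem mul_norm_sub_sq_le_inner_sub_of_le_bregmanDiv {h : E → ℝ} {h' : E → E} {l : ℝ}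
    (hsc : ∀ x y, l / 2 * ‖x - y‖ ^ 2 ≤ bregmanDiv h h' x y) (x y : E) :
    l * ‖x - y‖ ^ 2 ≤ ⟪h' x - h' y, x - y⟫ := by
  have hxy := hsc x y
  have hyx := hsc y x
  rw [norm_sub_rev] at hyx
  rw [← bregmanDiv_add_bregmanDiv_swap]
  linarith

theorem gradient_sub_eq_neg_smul_of_isLocalMin_bregmanDiv [CompleteSpace E] {h : E → ℝ}
    {h' : E → E} {η : ℝ} (hη : η ≠ 0) {d y x : E} (hdiff : HasGradientAt h (h' x) x)
    (hmin : IsLocalMin (fun κ => ⟪d, κ⟫ + (1 / η) * bregmanDiv h h' κ y) x) :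
    h' x - h' y = -η • d := by
  have hderiv : HasFDerivAt (fun κ => ⟪d, κ⟫ + (1 / η) * bregmanDiv h h' κ y)
      (InnerProductSpace.toDual ℝ E (d + (1 / η) • (h' x - h' y))) x := by
    have hlin := (innerSL ℝ (h' y)).hasFDerivAt.comp x ((hasFDerivAt_id x).sub_const y)
    refine ((innerSL ℝ d).hasFDerivAt.add
      ((((hasGradientAt_iff_hasFDerivAt.mp hdiff).sub_const (h y)).sub hlin).const_mul
        (1 / η))).congr_fderiv ?_
    ext v
    simp
  have hzero : d + (1 / η) • (h' x - h' y) = 0 :=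
    (InnerProductSpace.toDual ℝ E).map_eq_zero_iff.mp (hmin.hasFDerivAt_eq_zero hderiv)
  calc h' x - h' y = η • ((1 / η) • (h' x - h' y)) := by
        rw [smul_smul, mul_one_div_cancel hη, one_smul]
    _ = -η • d := by rw [eq_neg_of_add_eq_zero_right hzero, smul_neg, neg_smul]

end Bregman

theorem norm_le_div_of_mul_sq_le_inner {E : Type*} [NormedAddCommGroup E] [InnerProductSpace ℝ E]
    {l : ℝ} (hl : 0 < l) {g v : E} (hgv : l * ‖v‖ ^ 2 ≤ ⟪g, v⟫) : ‖v‖ ≤ ‖g‖ / l := by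
  rw [le_div_iff₀ hl]
  have hcs : l * ‖v‖ ^ 2 ≤ ‖g‖ * ‖v‖ := hgv.trans (real_inner_le_norm g v)
  rcases (norm_nonneg v).eq_or_lt with hv | hv
  · rw [← hv, zero_mul]; exact norm_nonneg g
  · nlinarith

theorem mirror_descent_step_bound_general {M : ℕ} (l η : ℝ) (hl : 0 < l) (hη : 0 < η)
    (h : EuclideanSpace ℝ (Fin M) → ℝ)
    (h' : EuclideanSpace ℝ (Fin M) → EuclideanSpace ℝ (Fin M))
    (hdiff : ∀ x, HasGradientAt h (h' x) x)
    (hsc : ∀ x y : EuclideanSpace ℝ (Fin M),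
      h x ≥ h y + ⟪h' y, x - y⟫ + (l / 2) * ‖x - y‖ ^ 2)
    (V : EuclideanSpace ℝ (Fin M) → EuclideanSpace ℝ (Fin M) → ℝ)
    (hV : ∀ x y, V x y = h x - h y - ⟪h' y, x - y⟫)
    (d κₜ κp : EuclideanSpace ℝ (Fin M))
    (hmin : ∀ κ : EuclideanSpace ℝ (Fin M),
      ⟪d, κp⟫ + (1 / η) * V κp κₜ ≤ ⟪d, κ⟫ + (1 / η) * V κ κₜ) :
    ‖κp - κₜ‖ ≤ (η / l) * ‖d‖ := by
  obtain rfl : V = bregmanDiv h h' := funext₂ hV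
  have hstep : h' κp - h' κₜ = -η • d :=
    gradient_sub_eq_neg_smul_of_isLocalMin_bregmanDiv hη.ne' (hdiff κp)
      (Filter.Eventually.of_forall hmin)
  have hsc' : ∀ x y, l / 2 * ‖x - y‖ ^ 2 ≤ bregmanDiv h h' x y := fun x y => by
    unfold bregmanDiv; linarith [hsc x y]
  have hmono := mul_norm_sub_sq_le_inner_sub_of_le_bregmanDiv hsc' κp κₜ
  rw [hstep] at hmono
  calc ‖κp - κₜ‖ ≤ ‖-η • d‖ / l := norm_le_div_of_mul_sq_le_inner hl hmono
    _ = η / l * ‖d‖ := by rw [norm_smul, norm_neg, Real.norm_of_nonneg hη.le]; ring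

/-- Bound on the size of one mirror-descent dual update under strong convexity. -/
theorem mirror_descent_step_bound {M : ℕ} (l η : ℝ) (hl : 0 < l) (hη : 0 < η)
    (h : EuclideanSpace ℝ (Fin M) → ℝ)
    (h' : EuclideanSpace ℝ (Fin M) → EuclideanSpace ℝ (Fin M))
    (hdiff : ∀ x, HasGradientAt h (h' x) x)
    (hconv : ConvexOn ℝ Set.univ h)
    (hsc : ∀ x y : EuclideanSpace ℝ (Fin M),
      h x ≥ h y + ⟪h' y, x - y⟫ + (l / 2) * ‖x - y‖ ^ 2)
    (V : EuclideanSpace ℝ (Fin M) → EuclideanSpace ℝ (Fin M) → ℝ)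
    (hV : ∀ x y, V x y = h x - h y - ⟪h' y, x - y⟫)
    (d κₜ κp : EuclideanSpace ℝ (Fin M))
    (hmin : ∀ κ : EuclideanSpace ℝ (Fin M),
      ⟪d, κp⟫ + (1 / η) * V κp κₜ ≤ ⟪d, κ⟫ + (1 / η) * V κ κₜ) :
    ‖κp - κₜ‖ ≤ (η / l) * ‖d‖ :=
  mirror_descent_step_bound_general l η hl hη h h' hdiff hsc V hV d κₜ κp hmin
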